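/- arXiv:2006.02703 — 3 statements merged into one kernel-verified Lean document; each statement's English description precedes it below -/
import Mathlib

section
/- Let X be a finite set, d : X × X → ℝ≥0 a metric (satisfying d(x,x)=0, symmetry, and the triangle inequality), and λ_d, λ_c : X → ℝ≥0 functions satisfying λ_d(x) ≤ d(x,y) + λ_d(y) and λ_c(y) ≤ λ_c(x) + d(x,y) for all x, y. Define GKR(μ, ν) = min over sub-couplings π of Σ_{x,y} d(x,y)π(x,y) + Σ_x λ_d(x)(μ(x) − Σ_y π(x,y)) + Σ_y λ_c(y)(ν(y) − Σ_x π(x,y)). Then GKR satisfies the triangle inequality: GKR(μ, η) ≤ GKR(μ, ν) + GKR(ν, η) for all μ, ν, η : X → ℝ≥0. -/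
/-! Glue sub-couplings `π₁` of `(μ, ν)` and `π₂` of `(ν, η)` at each intermediate point `y`: of the
mass `a` that `π₁` brings to `y` and the mass `b` that `π₂` takes from `y`, the amount `min a b` is
passed straight through. Writing the cost as `⟨λ_d, μ⟩ + ⟨λ_c, ν⟩ + ∑ (d x y - λ_d x - λ_c y) π x y`,
the triangle inequality prices the through-traffic, and the compatibility conditions say that the
unmatched mass `a - min a b` may as well be destroyed at its origin and `b - min a b` created at its
destination. What remains at `y` is `(λ_d + λ_c) y * max a b ≤ (λ_d + λ_c) y * ν y`, and these are
exactly the terms `⟨λ_d, ν⟩ + ⟨λ_c, ν⟩` of `GKR(μ, ν) + GKR(ν, η)` that the glued plan drops. -/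

open Finset

variable {X : Type*}

def IsSubcoupling [Fintype X] (μ ν : X → ℝ) (π : X → X → ℝ) : Prop :=
  (∀ x y, 0 ≤ π x y) ∧ (∀ x, ∑ y, π x y ≤ μ x) ∧ (∀ y, ∑ x, π x y ≤ ν y)

def GKRcost [Fintype X] (c : X → X → ℝ) (lamd lamc : X → ℝ) (μ ν : X → ℝ)
    (π : X → X → ℝ) : ℝ :=
  (∑ x, ∑ y, c x y * π x y) + (∑ x, lamd x * (μ x - ∑ y, π x y))
    + (∑ y, lamc y * (ν y - ∑ x, π x y))

noncomputable def GKR [Fintype X] (c : X → X → ℝ) (lamd lamc : X → ℝ) (μ ν : X → ℝ) : ℝ :=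
  sInf {v : ℝ | ∃ π : X → X → ℝ, IsSubcoupling μ ν π ∧ v = GKRcost c lamd lamc μ ν π}

noncomputable def OTC [Fintype X] (c : X → X → ℝ) (μ ν : X → ℝ) : ℝ :=
  sInf {v : ℝ | ∃ π : X → X → ℝ, (∀ x y, 0 ≤ π x y) ∧ (∀ x, ∑ y, π x y = μ x) ∧
    (∀ y, ∑ x, π x y = ν y) ∧ v = ∑ x, ∑ y, c x y * π x y}

lemma mul_min_div_mul_mul {a b : ℝ} (ha : 0 ≤ a) (hb : 0 ≤ b) :
    a * (min a b / (a * b)) * b = min a b := by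
  rcases ha.eq_or_lt with rfl | ha
  · simp [hb]
  rcases hb.eq_or_lt with rfl | hb
  · simp [ha.le]
  field_simp

lemma min_div_mul_mul_le_one {a b : ℝ} (ha : 0 ≤ a) :
    min a b / (a * b) * b ≤ 1 := by
  rcases eq_or_ne b 0 with rfl | hb
  · simp
  rw [mul_comm a b, ← div_div, div_right_comm, div_mul_cancel₀ _ hb]
  exact div_le_one_of_le₀ (min_le_left a b) ha

lemma mul_min_div_mul_le_one {a b : ℝ} (hb : 0 ≤ b) :
    a * (min a b / (a * b)) ≤ 1 := by
  rw [mul_comm, min_comm, mul_comm a b]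
  exact min_div_mul_mul_le_one hb

/-- Routing the fraction `min a b / (a * b)` of `p ⊗ q`, where `a` and `b` are the masses of `p`
and `q`, through a hub costs at most routing all of `p` into the hub and all of `q` out of it, plus
`κ` per unit of the larger mass. -/
lemma sum_sum_mul_hub_le {ι : Type*} [Fintype ι] (c : ι → ι → ℝ) (cin cout p q : ι → ℝ) (κ : ℝ)
    (hc : ∀ x z, c x z ≤ cin x + cout z + κ) (hcin : ∀ x, -κ ≤ cin x)
    (hcout : ∀ z, -κ ≤ cout z) (hp : ∀ x, 0 ≤ p x) (hq : ∀ z, 0 ≤ q z) :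
    ∑ x, ∑ z, c x z * (p x * (min (∑ x, p x) (∑ z, q z) / ((∑ x, p x) * ∑ z, q z)) * q z) ≤
      ∑ x, cin x * p x + ∑ z, cout z * q z + κ * max (∑ x, p x) (∑ z, q z) := by
  set a := ∑ x, p x with ha_def
  set b := ∑ z, q z with hb_def
  set w := min a b / (a * b)
  have ha : 0 ≤ a := sum_nonneg fun x _ => hp x
  have hb : 0 ≤ b := sum_nonneg fun z _ => hq z
  have hw : 0 ≤ w := div_nonneg (le_min ha hb) (mul_nonneg ha hb)
  have hin : -κ * a ≤ ∑ x, cin x * p x := by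
    rw [mul_sum]; exact sum_le_sum fun x _ => mul_le_mul_of_nonneg_right (hcin x) (hp x)
  have hout : -κ * b ≤ ∑ z, cout z * q z := by
    rw [mul_sum]; exact sum_le_sum fun z _ => mul_le_mul_of_nonneg_right (hcout z) (hq z)
  have hmass : a * w * b = min a b := mul_min_div_mul_mul ha hb
  have hα : w * b ≤ 1 := min_div_mul_mul_le_one ha
  have hβ : a * w ≤ 1 := mul_min_div_mul_le_one hb
  calc ∑ x, ∑ z, c x z * (p x * w * q z)
      ≤ ∑ x, ∑ z, (cin x + cout z + κ) * (p x * w * q z) := by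
        gcongr with x _ z _
        · exact mul_nonneg (mul_nonneg (hp x) hw) (hq z)
        · exact hc x z
    _ = (∑ x, cin x * p x) * (w * b) + (∑ z, cout z * q z) * (a * w) + κ * (a * w * b) := by
        have split : ∀ x z, (cin x + cout z + κ) * (p x * w * q z) =
            cin x * p x * (w * q z) + w * p x * (cout z * q z) + κ * w * (p x * q z) :=
          fun x z => by ring
        simp_rw [split, sum_add_distrib, ← mul_sum, ← sum_mul, ← mul_sum, ← ha_def, ← hb_def]
        ring
    _ ≤ ∑ x, cin x * p x + ∑ z, cout z * q z + κ * max a b := by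
        linarith [mul_le_mul_of_nonneg_right hin (sub_nonneg.2 hα),
          mul_le_mul_of_nonneg_right hout (sub_nonneg.2 hβ), congrArg (κ * ·) hmass,
          congrArg (κ * ·) (min_add_max a b)]

lemma csInf_le_csInf_add_csInf {s t u : Set ℝ} (hs : s.Nonempty) (ht : t.Nonempty)
    (hu : BddBelow u) (h : ∀ a ∈ s, ∀ b ∈ t, ∃ c ∈ u, c ≤ a + b) :
    sInf u ≤ sInf s + sInf t := by
  suffices sInf u - sInf t ≤ sInf s by linarith
  refine le_csInf hs fun a ha => ?_
  suffices sInf u - a ≤ sInf t by linarith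
  refine le_csInf ht fun b hb => ?_
  obtain ⟨c, hc, hcab⟩ := h a ha b hb
  linarith [csInf_le hu hc]

section

variable [Fintype X]

lemma GKRcost_eq_add_sum_sub_mul (c : X → X → ℝ) (lamd lamc μ ν : X → ℝ) (π : X → X → ℝ) :
    GKRcost c lamd lamc μ ν π = ∑ x, lamd x * μ x + ∑ y, lamc y * ν y +
      ∑ x, ∑ y, (c x y - lamd x - lamc y) * π x y := by
  simp only [GKRcost, mul_sub, sub_mul, mul_sum, sum_sub_distrib]
  rw [sum_comm (f := fun y x => lamc y * π x y)]
  ring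

lemma GKRcost_nonneg {c : X → X → ℝ} {lamd lamc μ ν : X → ℝ} {π : X → X → ℝ}
    (hc : ∀ x y, 0 ≤ c x y) (hld : ∀ x, 0 ≤ lamd x) (hlc : ∀ y, 0 ≤ lamc y)
    (hπ : IsSubcoupling μ ν π) : 0 ≤ GKRcost c lamd lamc μ ν π := by
  obtain ⟨hπ0, hπμ, hπν⟩ := hπ
  unfold GKRcost
  have transport : 0 ≤ ∑ x, ∑ y, c x y * π x y :=
    sum_nonneg fun x _ => sum_nonneg fun y _ => mul_nonneg (hc x y) (hπ0 x y)
  have destruction : 0 ≤ ∑ x, lamd x * (μ x - ∑ y, π x y) :=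
    sum_nonneg fun x _ => mul_nonneg (hld x) (sub_nonneg.2 (hπμ x))
  have creation : 0 ≤ ∑ y, lamc y * (ν y - ∑ x, π x y) :=
    sum_nonneg fun y _ => mul_nonneg (hlc y) (sub_nonneg.2 (hπν y))
  linarith

lemma isSubcoupling_zero {μ ν : X → ℝ} (hμ : ∀ x, 0 ≤ μ x) (hν : ∀ y, 0 ≤ ν y) :
    IsSubcoupling μ ν 0 :=
  ⟨fun _ _ => le_rfl, fun x => by simpa using hμ x, fun y => by simpa using hν y⟩

/-- `0` when no mass enters or leaves `y`, by `x / 0 = 0`. -/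
noncomputable def glueWeight (π₁ π₂ : X → X → ℝ) (y : X) : ℝ :=
  min (∑ x, π₁ x y) (∑ z, π₂ y z) / ((∑ x, π₁ x y) * ∑ z, π₂ y z)

noncomputable def glue (π₁ π₂ : X → X → ℝ) (x z : X) : ℝ :=
  ∑ y, π₁ x y * glueWeight π₁ π₂ y * π₂ y z

lemma isSubcoupling_glue {μ ν η : X → ℝ} {π₁ π₂ : X → X → ℝ} (h₁ : IsSubcoupling μ ν π₁)
    (h₂ : IsSubcoupling ν η π₂) : IsSubcoupling μ η (glue π₁ π₂) := by
  obtain ⟨h₁0, h₁μ, -⟩ := h₁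
  obtain ⟨h₂0, -, h₂η⟩ := h₂
  have hw : ∀ y, 0 ≤ glueWeight π₁ π₂ y := fun y =>
    div_nonneg (le_min (sum_nonneg fun x _ => h₁0 x y) (sum_nonneg fun z _ => h₂0 y z))
      (mul_nonneg (sum_nonneg fun x _ => h₁0 x y) (sum_nonneg fun z _ => h₂0 y z))
  refine ⟨fun x z => sum_nonneg fun y _ => mul_nonneg (mul_nonneg (h₁0 x y) (hw y)) (h₂0 y z),
    fun x => ?_, fun z => ?_⟩
  · calc ∑ z, glue π₁ π₂ x z = ∑ y, π₁ x y * (glueWeight π₁ π₂ y * ∑ z, π₂ y z) := by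
          simp only [glue, mul_sum, mul_assoc]
          exact sum_comm
      _ ≤ ∑ y, π₁ x y := sum_le_sum fun y _ => mul_le_of_le_one_right (h₁0 x y)
          (min_div_mul_mul_le_one (sum_nonneg fun x _ => h₁0 x y))
      _ ≤ μ x := h₁μ x
  · calc ∑ x, glue π₁ π₂ x z = ∑ y, (∑ x, π₁ x y) * glueWeight π₁ π₂ y * π₂ y z := by
          simp only [glue, sum_mul]
          exact sum_comm
      _ ≤ ∑ y, π₂ y z := sum_le_sum fun y _ => mul_le_of_le_one_left (h₂0 y z)
          (mul_min_div_mul_le_one (sum_nonneg fun z _ => h₂0 y z))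
      _ ≤ η z := h₂η z

lemma sum_sum_mul_glue_le (c : X → X → ℝ) (κ : X → ℝ)
    (htri : ∀ x y z, c x z ≤ c x y + c y z + κ y) (hin : ∀ x y, -κ y ≤ c x y)
    (hout : ∀ y z, -κ y ≤ c y z) {π₁ π₂ : X → X → ℝ} (h₁ : ∀ x y, 0 ≤ π₁ x y)
    (h₂ : ∀ y z, 0 ≤ π₂ y z) :
    ∑ x, ∑ z, c x z * glue π₁ π₂ x z ≤ ∑ x, ∑ y, c x y * π₁ x y + ∑ y, ∑ z, c y z * π₂ y z +
      ∑ y, κ y * max (∑ x, π₁ x y) (∑ z, π₂ y z) := by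
  calc ∑ x, ∑ z, c x z * glue π₁ π₂ x z
      = ∑ y, ∑ x, ∑ z, c x z * (π₁ x y * glueWeight π₁ π₂ y * π₂ y z) := by
        simp only [glue, mul_sum]
        exact (sum_congr rfl fun x _ => sum_comm).trans sum_comm
    _ ≤ ∑ y, (∑ x, c x y * π₁ x y + ∑ z, c y z * π₂ y z +
          κ y * max (∑ x, π₁ x y) (∑ z, π₂ y z)) := sum_le_sum fun y _ =>
        sum_sum_mul_hub_le c (c · y) (c y ·) (π₁ · y) (π₂ y ·) (κ y) (fun x z => htri x y z)
          (fun x => hin x y) (hout y) (fun x => h₁ x y) (h₂ y)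
    _ = _ := by
        rw [sum_add_distrib, sum_add_distrib, sum_comm (f := fun y x => c x y * π₁ x y)]

lemma GKRcost_glue_le {d : X → X → ℝ} {lamd lamc μ ν η : X → ℝ} {π₁ π₂ : X → X → ℝ}
    (hdtri : ∀ x y z, d x z ≤ d x y + d y z) (hld : ∀ x, 0 ≤ lamd x) (hlc : ∀ x, 0 ≤ lamc x)
    (hcompatd : ∀ x y, lamd x ≤ d x y + lamd y) (hcompatc : ∀ x y, lamc y ≤ lamc x + d x y)
    (h₁ : IsSubcoupling μ ν π₁) (h₂ : IsSubcoupling ν η π₂) :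
    GKRcost d lamd lamc μ η (glue π₁ π₂) ≤
      GKRcost d lamd lamc μ ν π₁ + GKRcost d lamd lamc ν η π₂ := by
  have hglue := sum_sum_mul_glue_le (fun x y => d x y - lamd x - lamc y)
    (fun y => lamd y + lamc y) (fun x y z => by linarith [hdtri x y z])
    (fun x y => by linarith [hcompatd x y]) (fun y z => by linarith [hcompatc y z]) h₁.1 h₂.1
  have hν : ∑ y, (lamd y + lamc y) * max (∑ x, π₁ x y) (∑ z, π₂ y z) ≤
      ∑ y, lamd y * ν y + ∑ y, lamc y * ν y := by
    rw [← sum_add_distrib]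
    exact sum_le_sum fun y _ => (mul_le_mul_of_nonneg_left (max_le (h₁.2.2 y) (h₂.2.1 y))
      (add_nonneg (hld y) (hlc y))).trans_eq (add_mul _ _ _)
  rw [GKRcost_eq_add_sum_sub_mul, GKRcost_eq_add_sum_sub_mul, GKRcost_eq_add_sum_sub_mul]
  linarith

end

theorem stmt3_general [Fintype X] (d : X → X → ℝ) (lamd lamc : X → ℝ)
    (hdnn : ∀ x y, 0 ≤ d x y)
    (hdtri : ∀ x y z, d x z ≤ d x y + d y z)
    (hld : ∀ x, 0 ≤ lamd x) (hlc : ∀ x, 0 ≤ lamc x)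
    (hcompatd : ∀ x y, lamd x ≤ d x y + lamd y)
    (hcompatc : ∀ x y, lamc y ≤ lamc x + d x y)
    (μ ν η : X → ℝ) (hμ : ∀ x, 0 ≤ μ x) (hν : ∀ x, 0 ≤ ν x) (hη : ∀ x, 0 ≤ η x) :
    GKR d lamd lamc μ η ≤ GKR d lamd lamc μ ν + GKR d lamd lamc ν η := by
  refine csInf_le_csInf_add_csInf ⟨_, 0, isSubcoupling_zero hμ hν, rfl⟩
    ⟨_, 0, isSubcoupling_zero hν hη, rfl⟩ ⟨0, ?_⟩ ?_
  · rintro _ ⟨π, hπ, rfl⟩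
    exact GKRcost_nonneg hdnn hld hlc hπ
  · rintro _ ⟨π₁, h₁, rfl⟩ _ ⟨π₂, h₂, rfl⟩
    exact ⟨_, ⟨glue π₁ π₂, isSubcoupling_glue h₁ h₂, rfl⟩,
      GKRcost_glue_le hdtri hld hlc hcompatd hcompatc h₁ h₂⟩

theorem stmt3 [Fintype X] (d : X → X → ℝ) (lamd lamc : X → ℝ)
    (hdnn : ∀ x y, 0 ≤ d x y) (hd0 : ∀ x, d x x = 0)
    (hdsymm : ∀ x y, d x y = d y x)
    (hdtri : ∀ x y z, d x z ≤ d x y + d y z)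
    (hld : ∀ x, 0 ≤ lamd x) (hlc : ∀ x, 0 ≤ lamc x)
    (hcompatd : ∀ x y, lamd x ≤ d x y + lamd y)
    (hcompatc : ∀ x y, lamc y ≤ lamc x + d x y)
    (μ ν η : X → ℝ) (hμ : ∀ x, 0 ≤ μ x) (hν : ∀ x, 0 ≤ ν x) (hη : ∀ x, 0 ≤ η x) :
    GKR d lamd lamc μ η ≤ GKR d lamd lamc μ ν + GKR d lamd lamc ν η :=
  stmt3_general d lamd lamc hdnn hdtri hld hlc hcompatd hcompatc μ ν η hμ hν hη
end

section
/- Let X be a finite set, c : X × X → ℝ≥0 with c(x,x) = 0 for all x and c(x,y) > 0 for x ≠ y, and λ_d, λ_c : X → ℝ with λ_d(x) > 0 and λ_c(x) > 0 for all x. Define GKR(μ, ν) as the minimum over sub-couplings π of Σ_{x,y} c(x,y)π(x,y) + Σ_x λ_d(x)(μ(x) − Σ_y π(x,y)) + Σ_y λ_c(y)(ν(y) − Σ_x π(x,y)). Then GKR(μ, ν) = 0 if and only if μ = ν. -/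
open Finset

variable {X : Type*}

theorem stmt4 [Fintype X] (c : X → X → ℝ) (lamd lamc : X → ℝ)
    (hcnn : ∀ x y, 0 ≤ c x y) (hc0 : ∀ x, c x x = 0)
    (hcpos : ∀ x y, x ≠ y → 0 < c x y)
    (hld : ∀ x, 0 < lamd x) (hlc : ∀ x, 0 < lamc x)
    (μ ν : X → ℝ) (hμ : ∀ x, 0 ≤ μ x) (hν : ∀ x, 0 ≤ ν x) :
    GKR c lamd lamc μ ν = 0 ↔ μ = ν := by
  classical
  have hnn : ∀ π : X → X → ℝ, IsSubcoupling μ ν π → 0 ≤ GKRcost c lamd lamc μ ν π := by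
    rintro π ⟨hπ0, hrow, hcol⟩
    unfold GKRcost
    have h1 : 0 ≤ ∑ x, ∑ y, c x y * π x y :=
      Finset.sum_nonneg fun x _ => Finset.sum_nonneg fun y _ => mul_nonneg (hcnn x y) (hπ0 x y)
    have h2 : 0 ≤ ∑ x, lamd x * (μ x - ∑ y, π x y) :=
      Finset.sum_nonneg fun x _ => mul_nonneg (hld x).le (by linarith [hrow x])
    have h3 : 0 ≤ ∑ y, lamc y * (ν y - ∑ x, π x y) :=
      Finset.sum_nonneg fun y _ => mul_nonneg (hlc y).le (by linarith [hcol y])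
    linarith
  have hSne : {v : ℝ | ∃ π : X → X → ℝ, IsSubcoupling μ ν π ∧ v = GKRcost c lamd lamc μ ν π}.Nonempty := by
    refine ⟨GKRcost c lamd lamc μ ν 0, 0, ⟨fun x y => le_refl 0, fun x => ?_, fun y => ?_⟩, rfl⟩
    · simpa using hμ x
    · simpa using hν y
  constructor
  · intro h0
    by_contra hne
    obtain ⟨x0, hx0⟩ : ∃ x0, μ x0 ≠ ν x0 := by
      by_contra h; push_neg at h; exact hne (funext h)
    haveI : Nonempty X := ⟨x0⟩
    set f : X → ℝ := fun y => if y = x0 then 1 else min (c x0 y) (c y x0) with hf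
    have hfpos : ∀ y, 0 < f y := by
      intro y
      by_cases h : y = x0 <;> simp [hf, h]
      exact ⟨hcpos _ _ (Ne.symm h), hcpos _ _ h⟩
    obtain ⟨m0, hm0mem, hm0⟩ := Finset.exists_min_image univ f ⟨x0, mem_univ x0⟩
    set m := f m0 with hmdef
    have hmpos : 0 < m := hfpos m0
    have hmle : ∀ y, y ≠ x0 → m ≤ c x0 y ∧ m ≤ c y x0 := by
      intro y hy
      have h := hm0 y (mem_univ y)
      simp only [hf, if_neg hy] at h
      exact ⟨le_trans h (min_le_left _ _), le_trans h (min_le_right _ _)⟩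
    set k := min m (min (lamd x0) (lamc x0)) with hk
    have hkpos : 0 < k := lt_min hmpos (lt_min (hld x0) (hlc x0))
    have hkm : k ≤ m := min_le_left _ _
    have hkd : k ≤ lamd x0 := le_trans (min_le_right _ _) (min_le_left _ _)
    have hkc : k ≤ lamc x0 := le_trans (min_le_right _ _) (min_le_right _ _)
    set δ := k * |μ x0 - ν x0| with hδ
    have hδpos : 0 < δ := mul_pos hkpos (abs_pos.mpr (sub_ne_zero.mpr hx0))
    have hlb : ∀ v ∈ {v : ℝ | ∃ π : X → X → ℝ, IsSubcoupling μ ν π ∧ v = GKRcost c lamd lamc μ ν π}, δ ≤ v := by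
      rintro v ⟨π, ⟨hπ0, hrow, hcol⟩, rfl⟩
      set A := ∑ y ∈ univ.erase x0, π x0 y with hA
      set B := ∑ x ∈ univ.erase x0, π x x0 with hB
      set sd := μ x0 - ∑ y, π x0 y with hsd
      set sc := ν x0 - ∑ x, π x x0 with hsc
      have hA0 : 0 ≤ A := Finset.sum_nonneg fun y _ => hπ0 x0 y
      have hB0 : 0 ≤ B := Finset.sum_nonneg fun x _ => hπ0 x x0
      have hsd0 : 0 ≤ sd := by have := hrow x0; rw [hsd]; linarith
      have hsc0 : 0 ≤ sc := by have := hcol x0; rw [hsc]; linarith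
      have hrowsplit : ∑ y, π x0 y = π x0 x0 + A :=
        (Finset.add_sum_erase univ (fun y => π x0 y) (mem_univ x0)).symm
      have hcolsplit : ∑ x, π x x0 = π x0 x0 + B :=
        (Finset.add_sum_erase univ (fun x => π x x0) (mem_univ x0)).symm
      have habs : |μ x0 - ν x0| ≤ sd + sc + A + B := by
        have hid : μ x0 - ν x0 = sd - sc + A - B := by
          rw [hsd, hsc, hrowsplit, hcolsplit]; ring
        rw [abs_le]; constructor <;> [linarith; linarith]
      have hc1 : m * A + m * B ≤ ∑ x, ∑ y, c x y * π x y := by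
        have hsplit : ∑ x, ∑ y, c x y * π x y
            = (∑ y, c x0 y * π x0 y) + ∑ x ∈ univ.erase x0, ∑ y, c x y * π x y :=
          (Finset.add_sum_erase univ (fun x => ∑ y, c x y * π x y) (mem_univ x0)).symm
        have h1 : m * A ≤ ∑ y, c x0 y * π x0 y := by
          have hr : ∑ y, c x0 y * π x0 y
              = c x0 x0 * π x0 x0 + ∑ y ∈ univ.erase x0, c x0 y * π x0 y :=
            (Finset.add_sum_erase univ (fun y => c x0 y * π x0 y) (mem_univ x0)).symm
          rw [hr, hc0, zero_mul, zero_add, hA, Finset.mul_sum]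
          exact Finset.sum_le_sum fun y hy =>
            mul_le_mul_of_nonneg_right ((hmle y (Finset.mem_erase.1 hy).1).1) (hπ0 x0 y)
        have h2 : m * B ≤ ∑ x ∈ univ.erase x0, ∑ y, c x y * π x y := by
          have h2a : ∀ x ∈ univ.erase x0, m * π x x0 ≤ ∑ y, c x y * π x y := by
            intro x hx
            have hx' := (Finset.mem_erase.1 hx).1
            calc m * π x x0 ≤ c x x0 * π x x0 :=
                  mul_le_mul_of_nonneg_right ((hmle x hx').2) (hπ0 x x0)
              _ ≤ ∑ y, c x y * π x y :=
                  Finset.single_le_sum (fun y _ => mul_nonneg (hcnn x y) (hπ0 x y)) (mem_univ x0)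
          calc m * B = ∑ x ∈ univ.erase x0, m * π x x0 := by rw [hB, Finset.mul_sum]
            _ ≤ _ := Finset.sum_le_sum h2a
        linarith
      have hc2 : lamd x0 * sd ≤ ∑ x, lamd x * (μ x - ∑ y, π x y) := by
        rw [hsd]
        exact Finset.single_le_sum (f := fun x => lamd x * (μ x - ∑ y, π x y))
          (fun x _ => mul_nonneg (hld x).le (by linarith [hrow x])) (mem_univ x0)
      have hc3 : lamc x0 * sc ≤ ∑ y, lamc y * (ν y - ∑ x, π x y) := by
        rw [hsc]
        exact Finset.single_le_sum (f := fun y => lamc y * (ν y - ∑ x, π x y))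
          (fun y _ => mul_nonneg (hlc y).le (by linarith [hcol y])) (mem_univ x0)
      have hbound : k * (sd + sc + A + B) ≤ GKRcost c lamd lamc μ ν π := by
        unfold GKRcost
        nlinarith [mul_le_mul_of_nonneg_right hkm hA0, mul_le_mul_of_nonneg_right hkm hB0,
          mul_le_mul_of_nonneg_right hkd hsd0, mul_le_mul_of_nonneg_right hkc hsc0]
      calc δ ≤ k * (sd + sc + A + B) := mul_le_mul_of_nonneg_left habs hkpos.le
        _ ≤ _ := hbound
    have hge : δ ≤ GKR c lamd lamc μ ν := le_csInf hSne hlb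
    rw [h0] at hge
    linarith
  · intro heq
    subst heq
    set π0 : X → X → ℝ := fun x y => if x = y then μ x else 0 with hπ0def
    have hrow0 : ∀ x, ∑ y, π0 x y = μ x := by intro x; simp [hπ0def]
    have hcol0 : ∀ y, ∑ x, π0 x y = μ y := by intro y; simp [hπ0def]
    have hsub : IsSubcoupling μ μ π0 :=
      ⟨fun x y => by by_cases h : x = y <;> simp [hπ0def, h, hμ],
        fun x => (hrow0 x).le, fun y => (hcol0 y).le⟩
    have hcost : GKRcost c lamd lamc μ μ π0 = 0 := by
      unfold GKRcost
      simp only [hrow0, hcol0, sub_self, mul_zero, Finset.sum_const_zero, add_zero]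
      apply Finset.sum_eq_zero
      intro x _
      apply Finset.sum_eq_zero
      intro y _
      by_cases h : x = y
      · subst h; simp [hπ0def, hc0]
      · simp [hπ0def, h]
    apply le_antisymm
    · exact csInf_le ⟨0, fun v ⟨π, hπ, hv⟩ => hv ▸ hnn π hπ⟩ ⟨π0, hsub, hcost.symm⟩
    · exact le_csInf hSne fun v ⟨π, hπ, hv⟩ => hv ▸ hnn π hπ
end

section
/- Let X be a finite set with two costs c₁ and c₂ and suppose for all measures ρ, σ with equal total mass, OT_{c₂}(ρ, σ) ≤ D · OT_{c₁}(ρ, σ) for a constant D ≥ 1, where OT_c is the balanced optimal transport cost. Then for any λ_d, λ_c : X → ℝ≥0 and any measures μ, ν, GKR₂(μ, ν) ≤ D · GKR₁(μ, ν), where GKRᵢ denotes the generalized Kantorovich–Rubinstein distance with ground cost cᵢ. -/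
open Finset

variable {X : Type*}

theorem stmt13 [Fintype X] (c1 c2 : X → X → ℝ) (D : ℝ) (hD : 1 ≤ D)
    (hc1 : ∀ x y, 0 ≤ c1 x y) (hc2 : ∀ x y, 0 ≤ c2 x y)
    (hdom : ∀ ρ σ : X → ℝ, (∀ x, 0 ≤ ρ x) → (∀ x, 0 ≤ σ x) →
      (∑ x, ρ x) = (∑ x, σ x) → OTC c2 ρ σ ≤ D * OTC c1 ρ σ)
    (lamd lamc : X → ℝ) (hld : ∀ x, 0 ≤ lamd x) (hlc : ∀ x, 0 ≤ lamc x)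
    (μ ν : X → ℝ) (hμ : ∀ x, 0 ≤ μ x) (hν : ∀ x, 0 ≤ ν x) :
    GKR c2 lamd lamc μ ν ≤ D * GKR c1 lamd lamc μ ν := by
  have hD0 : (0:ℝ) < D := lt_of_lt_of_le one_pos hD
  -- helper: existence of a coupling for balanced nonneg marginals
  have exists_coupling : ∀ ρ σ : X → ℝ, (∀ x, 0 ≤ ρ x) → (∀ x, 0 ≤ σ x) →
      (∑ x, ρ x) = (∑ x, σ x) → ∃ π : X → X → ℝ, (∀ x y, 0 ≤ π x y) ∧
      (∀ x, ∑ y, π x y = ρ x) ∧ (∀ y, ∑ x, π x y = σ y) := by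
    intro ρ σ hρ hσ hbal
    by_cases hM : (∑ x, ρ x) = 0
    · refine ⟨fun _ _ => 0, fun _ _ => le_refl 0, ?_, ?_⟩
      · intro x
        rw [Finset.sum_const_zero]
        exact ((Finset.sum_eq_zero_iff_of_nonneg (fun x _ => hρ x)).1 hM x (mem_univ x)).symm
      · intro y
        rw [Finset.sum_const_zero]
        exact ((Finset.sum_eq_zero_iff_of_nonneg (fun x _ => hσ x)).1 (hbal ▸ hM) y
          (mem_univ y)).symm
    · refine ⟨fun x y => ρ x * σ y / (∑ x, ρ x), fun x y => div_nonneg (mul_nonneg (hρ x) (hσ y)) (Finset.sum_nonneg fun x _ => hρ x), ?_, ?_⟩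
      · intro x
        rw [← Finset.sum_div, ← Finset.mul_sum, ← hbal, mul_div_assoc,
          div_self hM, mul_one]
      · intro y
        simp only [div_eq_mul_inv]
        rw [← Finset.sum_mul, ← Finset.sum_mul, mul_right_comm,
          mul_inv_cancel₀ hM, one_mul]
  -- lower bound 0 for OTC sets
  have otc_bdd : ∀ (c : X → X → ℝ), (∀ x y, 0 ≤ c x y) → ∀ ρ σ : X → ℝ,
      (0:ℝ) ∈ lowerBounds {v : ℝ | ∃ π : X → X → ℝ, (∀ x y, 0 ≤ π x y) ∧
        (∀ x, ∑ y, π x y = ρ x) ∧ (∀ y, ∑ x, π x y = σ y) ∧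
        v = ∑ x, ∑ y, c x y * π x y} := by
    rintro c hc ρ σ v ⟨π, hπ0, _, _, rfl⟩
    exact Finset.sum_nonneg fun x _ => Finset.sum_nonneg fun y _ =>
      mul_nonneg (hc x y) (hπ0 x y)
  -- lower bound 0 for GKR set with cost c2
  have gkr2_bdd : (0:ℝ) ∈ lowerBounds {v : ℝ | ∃ π : X → X → ℝ,
      IsSubcoupling μ ν π ∧ v = GKRcost c2 lamd lamc μ ν π} := by
    rintro v ⟨π, ⟨hπ0, hπ1, hπ2⟩, rfl⟩
    unfold GKRcost
    have h1 : (0:ℝ) ≤ ∑ x, ∑ y, c2 x y * π x y :=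
      Finset.sum_nonneg fun x _ => Finset.sum_nonneg fun y _ =>
        mul_nonneg (hc2 x y) (hπ0 x y)
    have h2 : (0:ℝ) ≤ ∑ x, lamd x * (μ x - ∑ y, π x y) :=
      Finset.sum_nonneg fun x _ => mul_nonneg (hld x) (sub_nonneg.2 (hπ1 x))
    have h3 : (0:ℝ) ≤ ∑ y, lamc y * (ν y - ∑ x, π x y) :=
      Finset.sum_nonneg fun y _ => mul_nonneg (hlc y) (sub_nonneg.2 (hπ2 y))
    linarith
  -- main step: GKR c2 ≤ D * v for each v in the GKR c1 set
  have key : ∀ v ∈ {v : ℝ | ∃ π : X → X → ℝ,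
      IsSubcoupling μ ν π ∧ v = GKRcost c1 lamd lamc μ ν π},
      GKR c2 lamd lamc μ ν ≤ D * v := by
    rintro v ⟨π, ⟨hπ0, hπ1, hπ2⟩, rfl⟩
    set ρ : X → ℝ := fun x => ∑ y, π x y with hρdef
    set σ : X → ℝ := fun y => ∑ x, π x y with hσdef
    have hρ0 : ∀ x, 0 ≤ ρ x := fun x => Finset.sum_nonneg fun y _ => hπ0 x y
    have hσ0 : ∀ y, 0 ≤ σ y := fun y => Finset.sum_nonneg fun x _ => hπ0 x y
    have hbal : (∑ x, ρ x) = ∑ y, σ y := by exact Finset.sum_comm ..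
    set P : ℝ := (∑ x, lamd x * (μ x - ρ x)) + (∑ y, lamc y * (ν y - σ y)) with hP
    have hP0 : 0 ≤ P := add_nonneg
      (Finset.sum_nonneg fun x _ => mul_nonneg (hld x) (sub_nonneg.2 (hπ1 x)))
      (Finset.sum_nonneg fun y _ => mul_nonneg (hlc y) (sub_nonneg.2 (hπ2 y)))
    -- OTC c2 ρ σ set is nonempty
    obtain ⟨π₂, hπ₂0, hπ₂1, hπ₂2⟩ := exists_coupling ρ σ hρ0 hσ0 hbal
    -- Step A : GKR c2 ≤ OTC c2 ρ σ + P
    have stepA : GKR c2 lamd lamc μ ν ≤ OTC c2 ρ σ + P := by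
      have : GKR c2 lamd lamc μ ν - P ≤ OTC c2 ρ σ := by
        unfold OTC
        refine le_csInf ?_ ?_
        · exact ⟨∑ x, ∑ y, c2 x y * π₂ x y, π₂, hπ₂0, hπ₂1, hπ₂2, rfl⟩
        rintro w ⟨τ, hτ0, hτ1, hτ2, rfl⟩
        have hsub : IsSubcoupling μ ν τ :=
          ⟨hτ0, fun x => (hτ1 x) ▸ hπ1 x, fun y => (hτ2 y) ▸ hπ2 y⟩
        have hmem : GKRcost c2 lamd lamc μ ν τ ∈ {v : ℝ | ∃ π : X → X → ℝ,
            IsSubcoupling μ ν π ∧ v = GKRcost c2 lamd lamc μ ν π} := ⟨τ, hsub, rfl⟩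
        have hle : GKR c2 lamd lamc μ ν ≤ GKRcost c2 lamd lamc μ ν τ := by
          unfold GKR; exact csInf_le ⟨0, gkr2_bdd⟩ hmem
        have hcost : GKRcost c2 lamd lamc μ ν τ = (∑ x, ∑ y, c2 x y * τ x y) + P := by
          unfold GKRcost
          rw [hP]
          have e1 : (∑ x, lamd x * (μ x - ∑ y, τ x y)) = ∑ x, lamd x * (μ x - ρ x) := by
            apply Finset.sum_congr rfl; intro x _; rw [hτ1 x]
          have e2 : (∑ y, lamc y * (ν y - ∑ x, τ x y)) = ∑ y, lamc y * (ν y - σ y) := by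
            apply Finset.sum_congr rfl; intro y _; rw [hτ2 y]
          rw [e1, e2]; ring
        linarith [hcost ▸ hle]
      linarith
    -- Step B : OTC c2 ρ σ ≤ D * OTC c1 ρ σ
    have stepB := hdom ρ σ hρ0 hσ0 hbal
    -- Step C : OTC c1 ρ σ ≤ ∑ c1 π
    have stepC : OTC c1 ρ σ ≤ ∑ x, ∑ y, c1 x y * π x y := by
      unfold OTC
      exact csInf_le ⟨0, otc_bdd c1 hc1 ρ σ⟩ ⟨π, hπ0, fun _ => rfl, fun _ => rfl, rfl⟩
    have hcost1 : GKRcost c1 lamd lamc μ ν π = (∑ x, ∑ y, c1 x y * π x y) + P := by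
      unfold GKRcost; rw [hP]; ring
    have hs1 : (0:ℝ) ≤ ∑ x, ∑ y, c1 x y * π x y :=
      Finset.sum_nonneg fun x _ => Finset.sum_nonneg fun y _ =>
        mul_nonneg (hc1 x y) (hπ0 x y)
    rw [hcost1]
    nlinarith [mul_nonneg (sub_nonneg.2 hD) hP0]
  -- conclude
  have hne : {v : ℝ | ∃ π : X → X → ℝ,
      IsSubcoupling μ ν π ∧ v = GKRcost c1 lamd lamc μ ν π}.Nonempty := by
    refine ⟨_, fun _ _ => 0, ⟨fun _ _ => le_refl 0, ?_, ?_⟩, rfl⟩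
    · intro x; rw [Finset.sum_const_zero]; exact hμ x
    · intro y; rw [Finset.sum_const_zero]; exact hν y
  have : GKR c2 lamd lamc μ ν / D ≤ GKR c1 lamd lamc μ ν := by
    unfold GKR
    apply le_csInf hne
    intro v hv
    rw [div_le_iff₀ hD0, mul_comm]
    exact key v hv
  calc GKR c2 lamd lamc μ ν = D * (GKR c2 lamd lamc μ ν / D) := by
        field_simp
    _ ≤ D * GKR c1 lamd lamc μ ν := by
        exact mul_le_mul_of_nonneg_left this (le_of_lt hD0)
end
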